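/- arXiv:2510.00739 — 3 statements merged into one kernel-verified Lean document; each statement's English description precedes it below -/
import Mathlib

section
/- Let φ (S×d_φ), ψ (S×d_ψ) with ψᵀψ = I, M an S×S matrix, and T a d_φ×d_ψ matrix. Define f(φ) = (1/2)‖φTψᵀ − M‖_F² and g(φ) = (1/2)‖φT − Mψ‖_F². Then the gradients with respect to φ coincide: ∇_φ f = (φTψᵀ − M)ψTᵀ = (φT − Mψ)Tᵀ = ∇_φ g. -/
open Matrix BigOperators

/-- Squared Frobenius norm of a real matrix. -/
noncomputable def frobSq {m n : ℕ} (A : Matrix (Fin m) (Fin n) ℝ) : ℝ :=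
  ∑ i, ∑ j, (A i j) ^ 2

lemma deriv_half_frobSq {m n : ℕ} (A B : Matrix (Fin m) (Fin n) ℝ) :
    deriv (fun t : ℝ => (1 / 2) * frobSq (A + t • B)) 0 = Matrix.trace (Bᵀ * A) := by
  have h : HasDerivAt (fun t : ℝ => (1 / 2) * frobSq (A + t • B))
      (∑ i, ∑ j, A i j * B i j) 0 := by
    have h1 : HasDerivAt (fun t : ℝ => frobSq (A + t • B))
        (∑ i, ∑ j, 2 * A i j * B i j) 0 := by
      simp only [frobSq, Matrix.add_apply, Matrix.smul_apply, smul_eq_mul]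
      apply HasDerivAt.fun_sum
      intro i _
      apply HasDerivAt.fun_sum
      intro j _
      have : HasDerivAt (fun t : ℝ => A i j + t * B i j) (B i j) 0 := by
        simpa using ((hasDerivAt_id (0:ℝ)).mul_const (B i j)).const_add (A i j)
      have := this.fun_pow 2
      simpa [mul_comm, mul_assoc, mul_left_comm] using this
    have := h1.const_mul ((1:ℝ)/2)
    refine this.congr_deriv ?_
    rw [Finset.mul_sum]
    congr 1; ext i
    rw [Finset.mul_sum]
    congr 1; ext j
    ring
  rw [h.deriv]
  simp only [Matrix.trace, Matrix.diag, Matrix.mul_apply, Matrix.transpose_apply]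
  rw [Finset.sum_comm]
  congr 1; ext i; congr 1; ext j; ring

/-- Gradient matching in `φ`: with `ψᵀψ = I`, the losses
`f(φ) = ½‖φTψᵀ - M‖_F²` and `g(φ) = ½‖φT - Mψ‖_F²` have equal gradients in `φ`,
namely `(φTψᵀ - M)ψTᵀ = (φT - Mψ)Tᵀ`.  Gradients are expressed via directional
derivatives: `d/dt f(φ + tH)|₀ = ⟨H, ∇f⟩_F = trace(Hᵀ ∇f)`. -/
theorem stmt3 {S dφ dψ : ℕ} (φ : Matrix (Fin S) (Fin dφ) ℝ) (ψ : Matrix (Fin S) (Fin dψ) ℝ)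
    (hψ : ψᵀ * ψ = 1) (M : Matrix (Fin S) (Fin S) ℝ) (T : Matrix (Fin dφ) (Fin dψ) ℝ) :
    (φ * T * ψᵀ - M) * ψ * Tᵀ = (φ * T - M * ψ) * Tᵀ ∧
    ∀ H : Matrix (Fin S) (Fin dφ) ℝ,
      deriv (fun t : ℝ => (1 / 2) * frobSq ((φ + t • H) * T * ψᵀ - M)) 0
        = Matrix.trace (Hᵀ * ((φ * T * ψᵀ - M) * ψ * Tᵀ)) ∧
      deriv (fun t : ℝ => (1 / 2) * frobSq ((φ + t • H) * T - M * ψ)) 0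
        = Matrix.trace (Hᵀ * ((φ * T - M * ψ) * Tᵀ)) := by
  have key : (φ * T * ψᵀ - M) * ψ * Tᵀ = (φ * T - M * ψ) * Tᵀ := by
    rw [Matrix.sub_mul, Matrix.sub_mul, Matrix.sub_mul]
    congr 1
    rw [Matrix.mul_assoc (φ * T) ψᵀ ψ, hψ, Matrix.mul_one]
  refine ⟨key, fun H => ?_⟩
  constructor
  · have e : ∀ t : ℝ, (φ + t • H) * T * ψᵀ - M
        = (φ * T * ψᵀ - M) + t • (H * T * ψᵀ) := by
      intro t
      rw [Matrix.add_mul, Matrix.add_mul, Matrix.smul_mul, Matrix.smul_mul]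
      abel
    simp only [e]
    rw [deriv_half_frobSq]
    rw [show (H * T * ψᵀ)ᵀ = ψ * Tᵀ * Hᵀ by
      simp [Matrix.transpose_mul, Matrix.mul_assoc]]
    rw [Matrix.trace_mul_cycle, Matrix.trace_mul_comm]
    simp [Matrix.mul_assoc]
  · have e : ∀ t : ℝ, (φ + t • H) * T - M * ψ
        = (φ * T - M * ψ) + t • (H * T) := by
      intro t
      rw [Matrix.add_mul, Matrix.smul_mul]
      abel
    simp only [e]
    rw [deriv_half_frobSq]
    rw [Matrix.transpose_mul, ← Matrix.mul_assoc, Matrix.trace_mul_comm,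
      ← Matrix.mul_assoc, Matrix.trace_mul_comm]
    simp [Matrix.mul_assoc]
end

section
/- Let P be a row-stochastic S×S matrix, 0 ≤ γ < 1, M^π = (I − γP)⁻¹P, and M an arbitrary S×S matrix. Then ‖M − M^π‖_F² ≤ (S/(1−γ)²) · ‖M − P − γPM‖_F². -/
open Matrix BigOperators

/-- For row-stochastic `P`, `0 ≤ γ < 1`, `Mπ = (I - γP)⁻¹P`, and any `M`:
`‖M - Mπ‖_F² ≤ (S/(1-γ)²)·‖M - P - γPM‖_F²`. -/
theorem stmt10 {S : ℕ} (P : Matrix (Fin S) (Fin S) ℝ)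
    (hnn : ∀ i j, 0 ≤ P i j) (hrow : ∀ i, ∑ j, P i j = 1)
    (γ : ℝ) (hγ0 : 0 ≤ γ) (hγ1 : γ < 1) (M : Matrix (Fin S) (Fin S) ℝ) :
    frobSq (M - ((1 : Matrix (Fin S) (Fin S) ℝ) - γ • P)⁻¹ * P)
      ≤ (S / (1 - γ) ^ 2) * frobSq (M - P - γ • (P * M)) := by
  simp only [frobSq]
  set A : Matrix (Fin S) (Fin S) ℝ := 1 - γ • P with hA
  set B : Matrix (Fin S) (Fin S) ℝ := A⁻¹ with hB
  set E : Matrix (Fin S) (Fin S) ℝ := M - P - γ • (P * M) with hE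
  have h1γ : 0 < 1 - γ := by linarith
  -- powers of P are nonneg, row-stochastic
  have pnn : ∀ n : ℕ, ∀ i j, 0 ≤ (P ^ n) i j := by
    intro n
    induction n with
    | zero =>
      intro i j
      rw [pow_zero, Matrix.one_apply]
      split <;> norm_num
    | succ n ih =>
      intro i j
      rw [pow_succ, Matrix.mul_apply]
      exact Finset.sum_nonneg fun k _ => mul_nonneg (ih i k) (hnn k j)
  have prow : ∀ n : ℕ, ∀ i, ∑ j, (P ^ n) i j = 1 := by
    intro n
    induction n with
    | zero => intro i; simp [Matrix.one_apply]
    | succ n ih =>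
      intro i
      simp only [pow_succ, Matrix.mul_apply]
      rw [Finset.sum_comm]
      simp_rw [← Finset.mul_sum, hrow, mul_one]
      exact ih i
  -- invertibility
  have hdet : IsUnit A.det := by
    rw [isUnit_iff_ne_zero]
    intro h0
    obtain ⟨v, hv, hAv⟩ := (Matrix.exists_mulVec_eq_zero_iff).2 h0
    obtain ⟨i₀, -, hi₀⟩ := Finset.exists_max_image Finset.univ (fun i => |v i|)
      ⟨(Fin.pos_iff_nonempty.1 (by
        rcases Nat.eq_zero_or_pos S with h | h
        · exact absurd (funext fun i => absurd i.2 (by omega)) hv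
        · exact h)).some, Finset.mem_univ _⟩
    have hkey : ∀ i, v i = γ * ∑ j, P i j * v j := by
      intro i
      have := congrFun hAv i
      simp only [Matrix.mulVec, dotProduct, hA, Matrix.sub_apply, Matrix.smul_apply,
        Matrix.one_apply, smul_eq_mul, Pi.zero_apply] at this
      have : ∑ j, ((if i = j then (1:ℝ) else 0) - γ * P i j) * v j = 0 := this
      rw [Finset.sum_congr rfl (fun j _ => sub_mul _ _ _), Finset.sum_sub_distrib] at this
      simp [Finset.sum_ite_eq, mul_assoc, ← Finset.mul_sum] at this
      linarith [this]
    have hb : |v i₀| ≤ γ * |v i₀| := by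
      calc |v i₀| = γ * |∑ j, P i₀ j * v j| := by
            rw [hkey i₀, abs_mul, abs_of_nonneg hγ0]
        _ ≤ γ * ∑ j, P i₀ j * |v j| := by
            apply mul_le_mul_of_nonneg_left _ hγ0
            refine (Finset.abs_sum_le_sum_abs _ _).trans ?_
            apply Finset.sum_le_sum
            intro j _
            rw [abs_mul, abs_of_nonneg (hnn i₀ j)]
        _ ≤ γ * ∑ j, P i₀ j * |v i₀| := by
            apply mul_le_mul_of_nonneg_left _ hγ0
            exact Finset.sum_le_sum fun j _ =>
              mul_le_mul_of_nonneg_left (hi₀ j (Finset.mem_univ j)) (hnn i₀ j)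
        _ = γ * |v i₀| := by rw [← Finset.sum_mul, hrow, one_mul]
    have : |v i₀| ≤ 0 := by nlinarith [abs_nonneg (v i₀)]
    have hv0 : v i₀ = 0 := abs_eq_zero.1 (le_antisymm this (abs_nonneg _))
    apply hv
    funext i
    have := hi₀ i (Finset.mem_univ i)
    rw [hv0] at this
    simpa using abs_nonpos_iff.1 (by simpa using this)
  have hBA : B * A = 1 := Matrix.nonsing_inv_mul A hdet
  have hAB : A * B = 1 := Matrix.mul_nonsing_inv A hdet
  -- B = 1 + γ • (P * B)
  have hrec : B = 1 + γ • (P * B) := by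
    have : (1 - γ • P) * B = 1 := hAB
    rw [Matrix.sub_mul, Matrix.one_mul, Matrix.smul_mul] at this
    rw [← this]
    abel
  -- Neumann partial sums
  have hNeu : ∀ N : ℕ, B = (∑ n ∈ Finset.range N, γ ^ n • P ^ n) + γ ^ N • (P ^ N * B) := by
    intro N
    induction N with
    | zero => simp
    | succ N ih =>
      rw [Finset.sum_range_succ]
      conv_lhs => rw [ih]
      have : (P ^ N * B) = P ^ N + γ • (P ^ (N+1) * B) := by
        conv_lhs => rw [hrec]
        rw [Matrix.mul_add, Matrix.mul_one, Matrix.mul_smul, pow_succ, Matrix.mul_assoc]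
      rw [this, smul_add, smul_smul, ← pow_succ γ N]
      abel
  -- bound on |(P^N * B) i j|
  set C : ℝ := ∑ k, ∑ l, |B k l| with hC
  have hCnn : 0 ≤ C := Finset.sum_nonneg fun k _ => Finset.sum_nonneg fun l _ => abs_nonneg _
  have hPB : ∀ N i j, |(P ^ N * B) i j| ≤ C := by
    intro N i j
    rw [Matrix.mul_apply]
    calc |∑ k, (P ^ N) i k * B k j| ≤ ∑ k, |(P ^ N) i k * B k j| :=
          Finset.abs_sum_le_sum_abs _ _
      _ ≤ ∑ k, |B k j| := by
          apply Finset.sum_le_sum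
          intro k _
          rw [abs_mul, abs_of_nonneg (pnn N i k)]
          have h1 : (P ^ N) i k ≤ 1 := by
            rw [← prow N i]
            exact Finset.single_le_sum (fun l _ => pnn N i l) (Finset.mem_univ k)
          nlinarith [abs_nonneg (B k j)]
      _ ≤ C := Finset.sum_le_sum fun k _ =>
          Finset.single_le_sum (f := fun l => |B k l|) (fun l _ => abs_nonneg _)
            (Finset.mem_univ j)
  -- B entries nonneg
  have hBnn : ∀ i j, 0 ≤ B i j := by
    intro i j
    have key : ∀ N : ℕ, -(γ ^ N * C) ≤ B i j := by
      intro N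
      have := congrFun (congrFun (hNeu N) i) j
      simp only [Matrix.add_apply, Matrix.smul_apply, smul_eq_mul] at this
      have hpart : 0 ≤ (∑ n ∈ Finset.range N, γ ^ n • P ^ n) i j := by
        rw [Matrix.sum_apply]
        exact Finset.sum_nonneg fun n _ => by
          simp only [Matrix.smul_apply, smul_eq_mul]
          exact mul_nonneg (pow_nonneg hγ0 n) (pnn n i j)
      have habs : -(γ ^ N * C) ≤ γ ^ N * (P ^ N * B) i j := by
        have := neg_abs_le ((P ^ N * B) i j)
        have h2 := hPB N i j
        have hγN : 0 ≤ γ ^ N := pow_nonneg hγ0 N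
        nlinarith [abs_nonneg ((P ^ N * B) i j)]
      linarith
    by_contra hneg
    push_neg at hneg
    obtain ⟨N, hN⟩ := exists_pow_lt_of_lt_one (x := -B i j / (C + 1))
      (div_pos (by linarith) (by linarith)) hγ1
    have hγN : 0 ≤ γ ^ N := pow_nonneg hγ0 N
    have : γ ^ N * C < -B i j := by
      have h3 : γ ^ N * (C + 1) < -B i j := (lt_div_iff₀ (by linarith)).1 hN
      nlinarith
    linarith [key N]
  -- row sums of B
  have hBrow : ∀ i, ∑ j, B i j = 1 / (1 - γ) := by
    intro i
    have h1 : ∑ j, (B * A) i j = 1 := by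
      rw [hBA]
      simp [Matrix.one_apply]
    have h2 : ∑ j, (B * A) i j = (1 - γ) * ∑ k, B i k := by
      simp only [Matrix.mul_apply]
      rw [Finset.sum_comm]
      have : ∀ k, ∑ j, B i k * A k j = B i k * (1 - γ) := by
        intro k
        rw [← Finset.mul_sum]
        congr 1
        simp only [hA, Matrix.sub_apply, Matrix.smul_apply, Matrix.one_apply, smul_eq_mul]
        rw [Finset.sum_sub_distrib, ← Finset.mul_sum, hrow]
        simp
      simp_rw [this]
      rw [← Finset.sum_mul]
      ring
    rw [h2] at h1
    field_simp
    linarith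
  have hBentry : ∀ i k, B i k ≤ 1 / (1 - γ) := by
    intro i k
    rw [← hBrow i]
    exact Finset.single_le_sum (fun l _ => hBnn i l) (Finset.mem_univ k)
  -- identity: M - B * P = B * E
  have hid : M - B * P = B * E := by
    have hAM : E = A * M - P := by
      rw [hE, hA, Matrix.sub_mul, Matrix.one_mul, Matrix.smul_mul]
      abel
    rw [hAM, Matrix.mul_sub, ← Matrix.mul_assoc, hBA, Matrix.one_mul]
  rw [show M - A⁻¹ * P = B * E from hid]
  -- main estimate
  have step1 : ∀ i j, ((B * E) i j) ^ 2 ≤ (1 / (1 - γ)) * ∑ k, B i k * (E k j) ^ 2 := by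
    intro i j
    rw [Matrix.mul_apply]
    have cs := Finset.sum_sq_le_sum_mul_sum_of_sq_eq_mul (Finset.univ : Finset (Fin S))
      (r := fun k => B i k * E k j) (f := fun k => B i k) (g := fun k => B i k * (E k j) ^ 2)
      (fun k _ => hBnn i k) (fun k _ => mul_nonneg (hBnn i k) (sq_nonneg _))
      (fun k _ => by ring)
    refine cs.trans ?_
    apply mul_le_mul_of_nonneg_right
    · rw [hBrow i]
    · exact Finset.sum_nonneg fun k _ => mul_nonneg (hBnn i k) (sq_nonneg _)
  calc ∑ i, ∑ j, ((B * E) i j) ^ 2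
      ≤ ∑ i, ∑ j, (1 / (1 - γ)) * ∑ k, B i k * (E k j) ^ 2 :=
        Finset.sum_le_sum fun i _ => Finset.sum_le_sum fun j _ => step1 i j
    _ = (1 / (1 - γ)) * ∑ k, (∑ i, B i k) * (∑ j, (E k j) ^ 2) := by
        have h1 : ∀ i : Fin S, ∑ j, (1/(1-γ)) * ∑ k, B i k * (E k j)^2
            = (1/(1-γ)) * ∑ j, ∑ k, B i k * (E k j)^2 := fun i => (Finset.mul_sum _ _ _).symm
        simp_rw [h1]
        rw [← Finset.mul_sum]
        congr 1
        calc ∑ i, ∑ j, ∑ k, B i k * (E k j)^2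
            = ∑ i, ∑ k, ∑ j, B i k * (E k j)^2 :=
              Finset.sum_congr rfl (fun i _ => Finset.sum_comm ..)
          _ = ∑ k, ∑ i, ∑ j, B i k * (E k j)^2 := Finset.sum_comm ..
          _ = ∑ k, (∑ i, B i k) * (∑ j, (E k j)^2) := by
              refine Finset.sum_congr rfl fun k _ => ?_
              rw [Finset.sum_mul]
              exact Finset.sum_congr rfl fun i _ => (Finset.mul_sum _ _ _).symm
    _ ≤ (1 / (1 - γ)) * ∑ k, (S / (1 - γ)) * (∑ j, (E k j) ^ 2) := by
        apply mul_le_mul_of_nonneg_left _ (by positivity)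
        apply Finset.sum_le_sum
        intro k _
        apply mul_le_mul_of_nonneg_right _ (Finset.sum_nonneg fun j _ => sq_nonneg _)
        calc ∑ i, B i k ≤ ∑ _i : Fin S, 1 / (1 - γ) :=
              Finset.sum_le_sum fun i _ => hBentry i k
          _ = S / (1 - γ) := by simp [div_eq_mul_inv]
    _ = (S / (1 - γ) ^ 2) * ∑ k, ∑ j, (E k j) ^ 2 := by
        rw [← Finset.mul_sum, ← mul_assoc]
        congr 1
        rw [pow_two]
        field_simp
end

section
/- Let φ (S×d_φ, φᵀφ = I), ψ (S×d_ψ, ψᵀψ = I), P a symmetric row-stochastic S×S matrix, 0 ≤ γ < 1, and M = (I − γP)⁻¹P. Consider the TD fixed-point equation in T (d_φ×d_ψ): T = φᵀPψ + γφᵀPφT. Then this equation has the unique solution T* = (φᵀ(I − γP)φ)⁻¹ φᵀPψ, and φT* = φ(φᵀ(I−γP)φ)⁻¹φᵀ(I−γP) · Mψ, i.e., φT* equals the oblique projection of the successor features Mψ onto the span of φ. -/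
open Matrix BigOperators

lemma quad_le_aux {S : ℕ} (P : Matrix (Fin S) (Fin S) ℝ) (hsym : Pᵀ = P)
    (hnn : ∀ i j, 0 ≤ P i j) (hrow : ∀ i, ∑ j, P i j = 1) (x : Fin S → ℝ) :
    x ⬝ᵥ P *ᵥ x ≤ x ⬝ᵥ x := by
  have hcol : ∀ j, ∑ i, P i j = 1 := by
    intro j
    have : ∀ i, P i j = P j i := fun i => by
      conv_lhs => rw [← hsym]
      rfl
    simp_rw [this]; exact hrow j
  have h1 : x ⬝ᵥ P *ᵥ x = ∑ i, ∑ j, P i j * (x i * x j) := by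
    simp only [dotProduct, mulVec, Finset.mul_sum]
    congr 1; ext i; congr 1; ext j; ring
  rw [h1]
  have h2 : ∑ i, ∑ j, P i j * (x i * x j)
      ≤ ∑ i, ∑ j, P i j * ((x i ^ 2 + x j ^ 2) / 2) := by
    refine Finset.sum_le_sum fun i _ => Finset.sum_le_sum fun j _ => ?_
    refine mul_le_mul_of_nonneg_left ?_ (hnn i j)
    nlinarith [sq_nonneg (x i - x j)]
  refine h2.trans_eq ?_
  have e0 : ∑ i, ∑ j, P i j * ((x i ^ 2 + x j ^ 2) / 2)
      = (∑ i, ∑ j, P i j * x i ^ 2) / 2 + (∑ i, ∑ j, P i j * x j ^ 2) / 2 := by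
    have hp : ∀ i j, P i j * ((x i ^ 2 + x j ^ 2) / 2)
        = P i j * x i ^ 2 / 2 + P i j * x j ^ 2 / 2 := fun i j => by ring
    simp_rw [hp, Finset.sum_add_distrib, Finset.sum_div]
  rw [e0]
  have e1 : (∑ i, ∑ j, P i j * x i ^ 2) = ∑ i, x i ^ 2 := by
    congr 1; ext i; rw [← Finset.sum_mul, hrow i, one_mul]
  have e2 : (∑ i : Fin S, ∑ j : Fin S, P i j * x j ^ 2) = ∑ j : Fin S, x j ^ 2 := by
    rw [Finset.sum_comm]
    congr 1; ext j; rw [← Finset.sum_mul, hcol j, one_mul]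
  rw [e1, e2, dotProduct]
  have : ∑ i, x i * x i = ∑ i, x i ^ 2 := by congr 1; ext i; ring
  rw [this]; ring

lemma B_posdef_aux {S : ℕ} (P : Matrix (Fin S) (Fin S) ℝ) (hsym : Pᵀ = P)
    (γ : ℝ) (hγ0 : 0 ≤ γ) (hγ1 : γ < 1)
    (hq : ∀ x : Fin S → ℝ, x ⬝ᵥ P *ᵥ x ≤ x ⬝ᵥ x) :
    ((1 : Matrix (Fin S) (Fin S) ℝ) - γ • P).PosDef := by
  rw [posDef_iff_dotProduct_mulVec]
  constructor
  · show _ᴴ = _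
    rw [conjTranspose_sub, conjTranspose_one, conjTranspose_smul,
      show Pᴴ = Pᵀ from rfl, hsym, star_trivial]
  · intro x hx
    have hxx : 0 < x ⬝ᵥ x := by
      have hnn' : 0 ≤ x ⬝ᵥ x := Finset.sum_nonneg fun i _ => mul_self_nonneg (x i)
      rcases lt_or_eq_of_le hnn' with h | h
      · exact h
      · exact absurd ((dotProduct_self_eq_zero).1 h.symm) hx
    have hval : star x ⬝ᵥ ((1 : Matrix (Fin S) (Fin S) ℝ) - γ • P) *ᵥ x
        = x ⬝ᵥ x - γ * (x ⬝ᵥ P *ᵥ x) := by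
      rw [sub_mulVec, one_mulVec, star_trivial, dotProduct_sub,
        smul_mulVec, dotProduct_smul, smul_eq_mul]
    rw [hval]
    nlinarith [hq x]

lemma A_posdef_aux {S dφ : ℕ} (φ : Matrix (Fin S) (Fin dφ) ℝ) (hφ : φᵀ * φ = 1)
    (B : Matrix (Fin S) (Fin S) ℝ) (hB : B.PosDef) : (φᵀ * B * φ).PosDef := by
  rw [posDef_iff_dotProduct_mulVec]
  constructor
  · show _ᴴ = _
    rw [conjTranspose_mul, conjTranspose_mul, hB.1,
      show φᴴ = φᵀ from rfl, show φᵀᴴ = φᵀᵀ from rfl, transpose_transpose, Matrix.mul_assoc]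
  · intro x hx
    have key : star x ⬝ᵥ (φᵀ * B * φ) *ᵥ x = star (φ *ᵥ x) ⬝ᵥ B *ᵥ (φ *ᵥ x) := by
      rw [star_trivial, star_trivial, ← mulVec_mulVec, ← mulVec_mulVec,
        dotProduct_mulVec, vecMul_transpose]
    have hφx : φ *ᵥ x ≠ 0 := by
      intro h
      apply hx
      have : φᵀ *ᵥ (φ *ᵥ x) = x := by rw [mulVec_mulVec, hφ, one_mulVec]
      rw [h, mulVec_zero] at this
      exact this.symm
    rw [key]
    exact hB.dotProduct_mulVec_pos hφx

/-- TD fixed point: with `φᵀφ = I`, `ψᵀψ = I`, `P` symmetric row-stochastic, `0 ≤ γ < 1`,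
and `M = (I - γP)⁻¹P`, the equation `T = φᵀPψ + γφᵀPφT` has the unique solution
`T* = (φᵀ(I - γP)φ)⁻¹φᵀPψ`, and `φT*` is the oblique projection
`φ(φᵀ(I-γP)φ)⁻¹φᵀ(I-γP)` applied to the successor features `Mψ`. -/
theorem stmt13 {S dφ dψ : ℕ} (φ : Matrix (Fin S) (Fin dφ) ℝ) (ψ : Matrix (Fin S) (Fin dψ) ℝ)
    (hφ : φᵀ * φ = 1) (hψ : ψᵀ * ψ = 1)
    (P : Matrix (Fin S) (Fin S) ℝ) (hsym : Pᵀ = P)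
    (hnn : ∀ i j, 0 ≤ P i j) (hrow : ∀ i, ∑ j, P i j = 1)
    (γ : ℝ) (hγ0 : 0 ≤ γ) (hγ1 : γ < 1) :
    (φᵀ * ((1 : Matrix (Fin S) (Fin S) ℝ) - γ • P) * φ)⁻¹ * (φᵀ * P * ψ)
      = φᵀ * P * ψ + γ • (φᵀ * P * φ *
          ((φᵀ * ((1 : Matrix (Fin S) (Fin S) ℝ) - γ • P) * φ)⁻¹ * (φᵀ * P * ψ))) ∧
    (∀ T : Matrix (Fin dφ) (Fin dψ) ℝ,
      T = φᵀ * P * ψ + γ • (φᵀ * P * φ * T) →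
      T = (φᵀ * ((1 : Matrix (Fin S) (Fin S) ℝ) - γ • P) * φ)⁻¹ * (φᵀ * P * ψ)) ∧
    φ * ((φᵀ * ((1 : Matrix (Fin S) (Fin S) ℝ) - γ • P) * φ)⁻¹ * (φᵀ * P * ψ))
      = (φ * (φᵀ * ((1 : Matrix (Fin S) (Fin S) ℝ) - γ • P) * φ)⁻¹ * φᵀ *
          ((1 : Matrix (Fin S) (Fin S) ℝ) - γ • P)) *
        ((((1 : Matrix (Fin S) (Fin S) ℝ) - γ • P)⁻¹ * P) * ψ) := by
  set B : Matrix (Fin S) (Fin S) ℝ := (1 : Matrix (Fin S) (Fin S) ℝ) - γ • P with hBdef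
  set A : Matrix (Fin dφ) (Fin dφ) ℝ := φᵀ * B * φ with hAdef
  set C : Matrix (Fin dφ) (Fin dψ) ℝ := φᵀ * P * ψ with hCdef
  have hq := quad_le_aux P hsym hnn hrow
  have hBpos : B.PosDef := B_posdef_aux P hsym γ hγ0 hγ1 hq
  have hApos : A.PosDef := A_posdef_aux φ hφ B hBpos
  have hBdet : IsUnit B.det := hBpos.det_pos.ne'.isUnit
  have hAdet : IsUnit A.det := hApos.det_pos.ne'.isUnit
  have hAiA : A⁻¹ * A = 1 := nonsing_inv_mul A hAdet
  have hAAi : A * A⁻¹ = 1 := mul_nonsing_inv A hAdet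
  have hBBi : B * B⁻¹ = 1 := mul_nonsing_inv B hBdet
  have hA1 : A = 1 - γ • (φᵀ * P * φ) := by
    rw [hAdef, hBdef, Matrix.mul_sub, Matrix.mul_one, Matrix.mul_smul,
      Matrix.sub_mul, Matrix.smul_mul, hφ]
  refine ⟨?_, ?_, ?_⟩
  · have h1 : γ • (φᵀ * P * φ * (A⁻¹ * C)) = (1 - A) * (A⁻¹ * C) := by
      rw [hA1, sub_sub_cancel, Matrix.smul_mul]
    rw [h1, Matrix.sub_mul, Matrix.one_mul,
      show A * (A⁻¹ * C) = C from by rw [← Matrix.mul_assoc, hAAi, Matrix.one_mul]]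
    abel
  · intro T hT
    have hAT : A * T = C := by
      rw [hA1, Matrix.sub_mul, Matrix.one_mul, Matrix.smul_mul]
      nth_rewrite 1 [hT]
      exact add_sub_cancel_right _ _
    calc T = (A⁻¹ * A) * T := by rw [hAiA, Matrix.one_mul]
      _ = A⁻¹ * (A * T) := by rw [Matrix.mul_assoc]
      _ = A⁻¹ * C := by rw [hAT]
  · have key : B * (B⁻¹ * (P * ψ)) = P * ψ := by
      rw [← Matrix.mul_assoc, hBBi, Matrix.one_mul]
    calc φ * (A⁻¹ * C) = φ * (A⁻¹ * (φᵀ * (P * ψ))) := by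
          rw [hCdef, Matrix.mul_assoc]
      _ = (φ * A⁻¹ * φᵀ * B) * ((B⁻¹ * P) * ψ) := by
          simp only [Matrix.mul_assoc, key]
end
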